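/- Norm identity between algebraic and sectional curvature tensors: for every algebraic curvature tensor R on T with Sec := Φ⁺R and every orthonormal basis E₁, …, E_m of T, Σ_{μ,ν,α,β=1}^m Sec(E_μ,E_ν;E_α,E_β)² = 12·Σ_{μ,ν,α,β=1}^m R(E_μ,E_ν;E_α,E_β)². -/

import Mathlib

/-!
Both sides are quadratic in the components `R_{abcd}`. Expanding `Φ⁺R` gives
`|Φ⁺R|² = 8 |R|² + 8 K` with `K = Σ R_{acbd} R_{adbc}`, after relabelling summation indices.
Rewriting the first factor of `K` by the Bianchi identity, `R_{acbd} = R_{abcd} - R_{cbad}`, and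
relabelling again, the antisymmetries and pair symmetry give `K = -K + |R|²`, so `2K = |R|²`.
-/

open scoped BigOperators

variable {T : Type*} [NormedAddCommGroup T] [InnerProductSpace ℝ T] [FiniteDimensional ℝ T]

/-- A map `T → T → T → T → ℝ` that is linear in each of its four arguments. -/
def IsQuadrilinear (R : T → T → T → T → ℝ) : Prop :=
  (∀ Y U V, IsLinearMap ℝ fun X => R X Y U V) ∧
  (∀ X U V, IsLinearMap ℝ fun Y => R X Y U V) ∧
  (∀ X Y V, IsLinearMap ℝ fun U => R X Y U V) ∧
  (∀ X Y U, IsLinearMap ℝ fun V => R X Y U V)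

/-- An algebraic curvature tensor on `T`. -/
def IsAlgCurv (R : T → T → T → T → ℝ) : Prop :=
  IsQuadrilinear R ∧
  (∀ X Y U V : T, R X Y U V = -R Y X U V) ∧
  (∀ X Y U V : T, R X Y U V = -R X Y V U) ∧
  (∀ X Y Z V : T, R X Y Z V + R Y Z X V + R Z X Y V = 0)

/-- `(Φ⁺R)(X,Y;U,V) := −2·(R(X,U;Y,V) + R(X,V;Y,U))`. -/
noncomputable def PhiPlus (R : T → T → T → T → ℝ) : T → T → T → T → ℝ :=
  fun X Y U V => -2 * (R X U Y V + R X V Y U)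

namespace Finset

variable {ι M : Type*} [Fintype ι] [AddCommMonoid M]

theorem sum_comm₁₂ (f : ι → ι → ι → ι → M) :
    ∑ a, ∑ b, ∑ c, ∑ d, f a b c d = ∑ a, ∑ b, ∑ c, ∑ d, f b a c d :=
  sum_comm

theorem sum_comm₂₃ (f : ι → ι → ι → ι → M) :
    ∑ a, ∑ b, ∑ c, ∑ d, f a b c d = ∑ a, ∑ b, ∑ c, ∑ d, f a c b d :=
  sum_congr rfl fun _ _ => sum_comm

theorem sum_comm₃₄ (f : ι → ι → ι → ι → M) :
    ∑ a, ∑ b, ∑ c, ∑ d, f a b c d = ∑ a, ∑ b, ∑ c, ∑ d, f a b d c :=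
  sum_congr rfl fun _ _ => sum_congr rfl fun _ _ => sum_comm

theorem sum_comm₁₃ (f : ι → ι → ι → ι → M) :
    ∑ a, ∑ b, ∑ c, ∑ d, f a b c d = ∑ a, ∑ b, ∑ c, ∑ d, f c b a d :=
  (sum_comm₁₂ f).trans <| (sum_comm₂₃ _).trans (sum_comm₁₂ _)

end Finset

open Finset

theorem sum_sq_phiPlus {V ι : Type*} [Fintype ι] (R : V → V → V → V → ℝ) (e : ι → V) :
    ∑ a, ∑ b, ∑ c, ∑ d, PhiPlus R (e a) (e b) (e c) (e d) ^ 2 =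
      8 * ∑ a, ∑ b, ∑ c, ∑ d, R (e a) (e b) (e c) (e d) ^ 2 +
      8 * ∑ a, ∑ b, ∑ c, ∑ d, R (e a) (e c) (e b) (e d) * R (e a) (e d) (e b) (e c) := by
  set r := fun a b c d => R (e a) (e b) (e c) (e d)
  have expand : ∀ a b c d, PhiPlus R (e a) (e b) (e c) (e d) ^ 2 =
      4 * r a c b d ^ 2 + 4 * r a d b c ^ 2 + 8 * (r a c b d * r a d b c) := fun _ _ _ _ => by
    simp only [PhiPlus, r]; ring
  have h₁ : ∑ a, ∑ b, ∑ c, ∑ d, r a c b d ^ 2 = ∑ a, ∑ b, ∑ c, ∑ d, r a b c d ^ 2 :=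
    (sum_comm₂₃ fun a b c d => r a b c d ^ 2).symm
  have h₂ : ∑ a, ∑ b, ∑ c, ∑ d, r a d b c ^ 2 = ∑ a, ∑ b, ∑ c, ∑ d, r a b c d ^ 2 :=
    (sum_comm₃₄ fun a b c d => r a c b d ^ 2).symm.trans h₁
  simp only [expand, sum_add_distrib, ← mul_sum, h₁, h₂]
  ring

section Curvature

variable {V : Type*} [NormedAddCommGroup V] [InnerProductSpace ℝ V] {R : V → V → V → V → ℝ}

namespace IsAlgCurv

theorem swap_pairs (hR : IsAlgCurv R) (x y u v : V) : R x y u v = R u v x y := by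
  obtain ⟨-, h₁, h₂, hB⟩ := hR
  -- the classical argument: add the Bianchi identities for the four cyclic shifts of `(x, u, y, v)`
  have := hB x u y v; have := hB u y v x; have := hB y v x u; have := hB v x u y
  have := h₂ u y x v; have := h₂ v x y u; have := h₂ x u v y; have := h₂ y v u x
  have := h₁ x y u v; have := h₂ x y u v; have := h₁ v u y x; have := h₂ u v y x
  linarith

theorem swap_middle (hR : IsAlgCurv R) (x y u v : V) : R x u y v = R x y u v - R u y x v := by
  have := hR.2.2.2 x u y v
  have := hR.2.1 y x u v
  linarith

end IsAlgCurv

variable {ι : Type*} [Fintype ι]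

theorem IsAlgCurv.two_mul_sum_mul_eq_sum_sq (hR : IsAlgCurv R) (e : ι → V) :
    2 * ∑ a, ∑ b, ∑ c, ∑ d, R (e a) (e c) (e b) (e d) * R (e a) (e d) (e b) (e c) =
      ∑ a, ∑ b, ∑ c, ∑ d, R (e a) (e b) (e c) (e d) ^ 2 := by
  set r := fun a b c d => R (e a) (e b) (e c) (e d)
  set S := ∑ a, ∑ b, ∑ c, ∑ d, r a b c d ^ 2
  set K := ∑ a, ∑ b, ∑ c, ∑ d, r a c b d * r a d b c
  have hskew : ∀ a b c d, r a b c d = -r a b d c := fun _ _ _ _ => hR.2.2.1 _ _ _ _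
  have hpair : ∀ a b c d, r a b c d = r c d a b := fun _ _ _ _ => hR.swap_pairs _ _ _ _
  have hmid : ∀ a b c d, r a b c d - r c b a d = r a c b d := fun _ _ _ _ =>
    (hR.swap_middle _ _ _ _).symm
  have hK₁ : ∑ a, ∑ b, ∑ c, ∑ d, r a b c d * r a d b c = -K := by
    have h : ∀ a b c d, r a c b d * r a d c b = -(r a c b d * r a d b c) := fun a b c d => by
      rw [hskew a d c b]; ring
    rw [sum_comm₂₃]
    simp only [h, sum_neg_distrib, K]
  have hK₂ : ∑ a, ∑ b, ∑ c, ∑ d, r c b a d * r a d b c = -S := by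
    have h : ∀ a b c d, r a b c d * r c d b a = -r a b c d ^ 2 := fun a b c d => by
      rw [hskew c d b a, ← hpair a b c d]; ring
    rw [sum_comm₁₃]
    simp only [h, sum_neg_distrib, S]
  have hK : K = -K + S :=
    calc K = ∑ a, ∑ b, ∑ c, ∑ d, (r a b c d - r c b a d) * r a d b c := by simp only [hmid, K]
      _ = -K + S := by simp only [sub_mul, sum_sub_distrib, hK₁, hK₂]; ring
  linarith

end Curvature

theorem secCurv_norm_identity {m : ℕ} (E : OrthonormalBasis (Fin m) ℝ T)
    (R : T → T → T → T → ℝ) (hR : IsAlgCurv R) :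
    ∑ μ : Fin m, ∑ ν : Fin m, ∑ α : Fin m, ∑ β : Fin m,
        (PhiPlus R (E μ) (E ν) (E α) (E β)) ^ 2 =
      12 * ∑ μ : Fin m, ∑ ν : Fin m, ∑ α : Fin m, ∑ β : Fin m,
        (R (E μ) (E ν) (E α) (E β)) ^ 2 := by
  rw [sum_sq_phiPlus, ← hR.two_mul_sum_mul_eq_sum_sq]
  ring
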